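/- Let μ ∈ (0, 2) and define the Lévy spectrum of fractal dimensions f_L : [0,∞) → ℝ by f_L(α) = μα if μα ≤ 1 and f_L(α) = 1/μ + 1 − α if μα > 1. Then for every α ≥ 1/μ, the supremum over ξ ∈ [0, α] of the quantity 2·f_L(ξ) + ξ equals 2 + 1/μ, and it is attained at ξ = 1/μ. (This saddle-point evaluation shows that the sum of two Lévy-distributed random variables has the same spectrum of fractal dimensions f_L as each summand.) -/
import Mathlib

/-- The Lévy spectrum of fractal dimensions: `f_L(α) = μα` for `μα ≤ 1` and
`f_L(α) = 1/μ + 1 − α` for `μα > 1`. -/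
noncomputable def levySFD (μ α : ℝ) : ℝ :=
  if μ * α ≤ 1 then μ * α else 1 / μ + 1 - α

/-- Saddle-point evaluation for the sum of two Lévy random variables: for `μ ∈ (0,2)` and
every `α ≥ 1/μ`, the supremum over `ξ ∈ [0, α]` of `2·f_L(ξ) + ξ` equals `2 + 1/μ`, and
it is attained at `ξ = 1/μ`. -/
theorem levy_sum_saddle_point (μ : ℝ) (hμ0 : 0 < μ) (hμ2 : μ < 2) :
    ∀ α : ℝ, 1 / μ ≤ α →
      IsGreatest ((fun ξ => 2 * levySFD μ ξ + ξ) '' Set.Icc 0 α) (2 + 1 / μ)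
        ∧ 2 * levySFD μ (1 / μ) + 1 / μ = 2 + 1 / μ := by
  intro α hα
  have hμ1 : μ * (1 / μ) = 1 := by field_simp
  have hval : levySFD μ (1 / μ) = 1 := by rw [levySFD, if_pos hμ1.le, hμ1]
  have h0 : (0 : ℝ) ≤ 1 / μ := by positivity
  refine ⟨⟨⟨1 / μ, ⟨h0, hα⟩, by show 2 * levySFD μ (1 / μ) + 1 / μ = 2 + 1 / μ; rw [hval]; ring⟩, ?_⟩, by rw [hval]; ring⟩
  rintro y ⟨ξ, ⟨hξ0, hξα⟩, rfl⟩
  simp only [levySFD]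
  split_ifs with h
  · have hξ : ξ ≤ 1 / μ := by
      rw [le_div_iff₀ hμ0]; linarith [mul_comm μ ξ]
    nlinarith
  · have hξ : 1 / μ ≤ ξ := by
      rw [div_le_iff₀ hμ0]; nlinarith
    linarith
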